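/- arXiv:1201.1539 — 8 statements merged into one kernel-verified Lean document; each statement's English description precedes it below -/
import Mathlib

section
/- Let P be a compact convex set in ℝ^d with 0 in its interior, and let Λ be an additive subgroup of ℝ^d such that the translates P + t, for t ∈ Λ, have pairwise disjoint interiors. Let F be a nonempty subset of ℝ^d whose direction space (the linear span of all differences x − y with x, y ∈ F) has dimension d − k. Then the set {t ∈ Λ : F ⊆ P + t} is finite and has at most 2^k elements. -/
/-!
Let `T` be the set of lattice translates containing `F`. For `s, t ∈ T` and `a, b ∈ F` we have
`(s - t) + (a - b) = (a - t) - (b - s) ∈ P - P`, so `(s - t) + conv (F - F) ⊆ P - P`; on the other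
hand the packing condition forbids `c • (s - t) ∈ P - P` for `c > 1` and `s ≠ t`. Because
`conv (F - F)` absorbs its span `V`, these two facts survive the passage to the `k`-dimensional
quotient `ℝ^d ⧸ V`: the image of `T` there is an antipodal set. Antipodal sets in dimension `k`
have at most `2 ^ k` points (Danzer–Grünbaum): in a suitable subspace the translates
`s + int (conv S)`, `s ∈ S`, are pairwise disjoint and all lie in `2 • int (conv S)`, whose volume
is `2 ^ k` times as large.
-/

open Pointwise MeasureTheory Filter Topology

section VectorSpace

variable {E : Type*} [AddCommGroup E] [Module ℝ E]

/-- For finite `S` this says that every difference `s - t` lies on the relative boundary of the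
difference body `conv S - conv S`: `S` is antipodal in the sense of Danzer and Grünbaum. -/
def IsAntipodal (S : Set E) : Prop :=
  ∀ s ∈ S, ∀ t ∈ S, s ≠ t → ∀ c : ℝ, 1 < c → c • (s - t) ∉ convexHull ℝ (S - S)

theorem exists_one_lt_smul_mem_of_mem_interior [TopologicalSpace E] [ContinuousSMul ℝ E]
    {K : Set E} {x : E} (hx : x ∈ interior K) : ∃ c : ℝ, 1 < c ∧ c • x ∈ K := by
  have hlim : Tendsto (fun c : ℝ ↦ c • x) (𝓝[>] 1) (𝓝 x) :=
    ((continuous_id.smul continuous_const).tendsto' 1 x (one_smul ℝ x)).mono_left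
      nhdsWithin_le_nhds
  obtain ⟨c, hcK, hc⟩ :=
    ((hlim.eventually (mem_interior_iff_mem_nhds.1 hx)).and self_mem_nhdsWithin).exists
  exact ⟨c, hc, hcK⟩

theorem IsAntipodal.sub_notMem_interior [TopologicalSpace E] [ContinuousSMul ℝ E] {S : Set E}
    (hS : IsAntipodal S) {s t : E} (hs : s ∈ S) (ht : t ∈ S) (hst : s ≠ t) :
    s - t ∉ interior (convexHull ℝ (S - S)) := fun h ↦ by
  obtain ⟨c, hc, hcK⟩ := exists_one_lt_smul_mem_of_mem_interior h
  exact hS s hs t ht hst c hc hcK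

theorem IsAntipodal.image {E' : Type*} [AddCommGroup E'] [Module ℝ E'] {S : Set E}
    (hS : IsAntipodal S) {L : E →ₗ[ℝ] E'} (hL : Set.InjOn L (Submodule.span ℝ (S - S))) :
    IsAntipodal (L '' S) := by
  rintro _ ⟨s, hs, rfl⟩ _ ⟨t, ht, rfl⟩ hne c hc hmem
  rw [← Set.image_sub, ← LinearMap.image_convexHull] at hmem
  obtain ⟨x, hx, hLx⟩ := hmem
  have hspan : convexHull ℝ (S - S) ⊆ Submodule.span ℝ (S - S) :=
    convexHull_min Submodule.subset_span (Submodule.convex _)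
  have hst : s - t ∈ Submodule.span ℝ (S - S) :=
    Submodule.subset_span (Set.sub_mem_sub hs ht)
  have hx_eq : x = c • (s - t) := hL (hspan hx) (Submodule.smul_mem _ c hst) (by simp [hLx])
  exact hS s hs t ht (by rintro rfl; exact hne rfl) c hc (hx_eq ▸ hx)

theorem Convex.exists_pos_mem_smul_of_mem_span {C : Set E} (hC : Convex ℝ C) (h0 : (0 : E) ∈ C)
    (hneg : ∀ x ∈ C, -x ∈ C) {z : E} (hz : z ∈ Submodule.span ℝ C) :
    ∃ r : ℝ, 0 < r ∧ z ∈ r • C := by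
  rw [← ConvexCone.mem_hull_of_convex hC]
  have hneg' : ∀ x ∈ ConvexCone.hull ℝ C, -x ∈ ConvexCone.hull ℝ C := by
    simp only [ConvexCone.mem_hull_of_convex hC]
    rintro _ ⟨r, hr, y, hy, rfl⟩
    exact ⟨r, hr, -y, hneg y hy, smul_neg r y⟩
  induction hz using Submodule.span_induction with
  | mem x hx => exact ConvexCone.subset_hull hx
  | zero => exact ConvexCone.subset_hull h0
  | add x y _ _ hx hy => exact (ConvexCone.hull ℝ C).add_mem hx hy
  | smul a x _ hx =>
    rcases lt_trichotomy a 0 with ha | rfl | ha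
    · simpa using (ConvexCone.hull ℝ C).smul_mem (neg_pos.2 ha) (hneg' x hx)
    · simpa using ConvexCone.subset_hull h0
    · exact (ConvexCone.hull ℝ C).smul_mem ha hx

theorem smul_sub_notMem_span {D C : Set E} (hD : Convex ℝ D) (hC : Convex ℝ C)
    (h0 : (0 : E) ∈ C) (hneg : ∀ x ∈ C, -x ∈ C) {w x : E} (hwC : w +ᵥ C ⊆ D)
    (hwD : ∀ c : ℝ, 1 < c → c • w ∉ D) (hx : x ∈ D) {c : ℝ} (hc : 1 < c) :
    c • w - x ∉ Submodule.span ℝ C := fun hv ↦ by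
  obtain ⟨r, hr, y, hy, hxy⟩ := hC.exists_pos_mem_smul_of_mem_span h0 hneg hv
  -- `c • w = x + r • y` with `x, w + y ∈ D`: average them with weights `1 : r`.
  have hcomb := hD hx (hwC ⟨y, hy, rfl⟩) (a := 1 / (1 + r)) (b := r / (1 + r))
    (by positivity) (by positivity) (by field_simp)
  refine hwD ((c + r) / (1 + r)) (by rw [one_lt_div (by positivity)]; linarith) ?_
  convert hcomb using 1
  simp only [vadd_eq_add] at hxy ⊢
  rw [show x = c • w - r • y by rw [hxy]; abel]
  module

theorem Convex.interior_inter_interior_vadd_nonempty [TopologicalSpace E]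
    [IsTopologicalAddGroup E] [ContinuousConstSMul ℝ E] {P : Set E} (hP : Convex ℝ P)
    (h0 : (0 : E) ∈ interior P) {w : E} {c : ℝ} (hc : 1 < c)
    (hw : c • w ∈ P - P) : (interior P ∩ interior (w +ᵥ P)).Nonempty := by
  obtain ⟨p, hp, q, hq, hpq⟩ := hw
  have hshrink : ∀ y ∈ P, c⁻¹ • y ∈ interior P := fun y hy ↦ by
    simpa using hP.combo_interior_self_mem_interior h0 hy (a := 1 - c⁻¹) (b := c⁻¹)
      (by simp [inv_lt_one_of_one_lt₀ hc]) (by positivity) (by ring)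
  refine ⟨c⁻¹ • p, hshrink p hp, ?_⟩
  rw [interior_vadd]
  refine ⟨c⁻¹ • q, hshrink q hq, ?_⟩
  have hp' : p = c • w + q := eq_add_of_sub_eq hpq
  show w + c⁻¹ • q = c⁻¹ • p
  rw [hp', smul_add, smul_smul, inv_mul_cancel₀ (by positivity), one_smul]

theorem Convex.vadd_convexHull_sub_subset_sub {P F : Set E} (hP : Convex ℝ P) {s t : E}
    (hs : F ⊆ s +ᵥ P) (ht : F ⊆ t +ᵥ P) : (s - t) +ᵥ convexHull ℝ (F - F) ⊆ P - P := by
  rw [← convexHull_vadd]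
  refine convexHull_min ?_ (hP.sub hP)
  rintro _ ⟨_, ⟨a, ha, b, hb, rfl⟩, rfl⟩
  obtain ⟨p, hp, rfl⟩ := ht ha
  obtain ⟨q, hq, rfl⟩ := hs hb
  exact ⟨p, hp, q, hq, by simp only [vadd_eq_add]; abel⟩

end VectorSpace

theorem ncard_le_two_pow_finrank_of_sub_notMem_interior {E : Type*} [NormedAddCommGroup E]
    [NormedSpace ℝ E] [FiniteDimensional ℝ E] {S : Set E} (hS : S.Finite)
    (hint : (interior (convexHull ℝ S)).Nonempty)
    (hsep : ∀ s ∈ S, ∀ t ∈ S, s ≠ t → s - t ∉ interior (convexHull ℝ (S - S))) :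
    S.ncard ≤ 2 ^ Module.finrank ℝ E := by
  borelize E
  set M := interior (convexHull ℝ S)
  let μ : Measure E := Measure.addHaar
  have hμpos : μ M ≠ 0 := (isOpen_interior.measure_pos μ hint).ne'
  have hμfin : μ M ≠ ⊤ :=
    ((hS.isCompact_convexHull (𝕜 := ℝ)).measure_lt_top.trans_le'
      (measure_mono interior_subset)).ne
  have hdisj : (hS.toFinset : Set E).PairwiseDisjoint (· +ᵥ M) := by
    intro s hs t ht hst
    rw [Function.onFun, Set.disjoint_left]
    rintro _ ⟨m₁, hm₁, rfl⟩ ⟨m₂, hm₂, h⟩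
    refine hsep t (by simpa using ht) s (by simpa using hs) (Ne.symm hst) ?_
    rw [convexHull_sub]
    refine subset_interior_sub ⟨m₁, hm₁, m₂, hm₂, ?_⟩
    simp only [vadd_eq_add] at h
    linear_combination (norm := module) -h
  have hsub : ∀ s ∈ S, s +ᵥ M ⊆ (2 : ℝ) • M := by
    rintro s hs _ ⟨m, hm, rfl⟩
    refine ⟨(2⁻¹ : ℝ) • s + (2⁻¹ : ℝ) • m, (convex_convexHull ℝ S).combo_self_interior_mem_interior
      (subset_convexHull ℝ S hs) hm (by norm_num) (by norm_num) (by norm_num), ?_⟩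
    simp only [vadd_eq_add]
    module
  have hvol : (S.ncard : ENNReal) * μ M ≤ 2 ^ Module.finrank ℝ E * μ M :=
    calc (S.ncard : ENNReal) * μ M = ∑ s ∈ hS.toFinset, μ (s +ᵥ M) := by
          simp [measure_vadd, Set.ncard_eq_toFinset_card S hS]
      _ = μ (⋃ s ∈ hS.toFinset, s +ᵥ M) :=
          (measure_biUnion_finset hdisj fun s _ ↦ isOpen_interior.vadd s |>.measurableSet).symm
      _ ≤ μ ((2 : ℝ) • M) :=
          measure_mono (Set.iUnion₂_subset fun s hs ↦ hsub s (by simpa using hs))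
      _ = 2 ^ Module.finrank ℝ E * μ M := by simp [Measure.addHaar_smul]
  exact_mod_cast (ENNReal.mul_le_mul_iff_left hμpos hμfin).1 hvol

theorem IsAntipodal.ncard_le {E : Type*} [AddCommGroup E] [Module ℝ E] {S : Set E}
    (hS : IsAntipodal S) (hfin : S.Finite) :
    S.ncard ≤ 2 ^ Module.finrank ℝ (Submodule.span ℝ (S - S)) := by
  rcases S.eq_empty_or_nonempty with rfl | hne
  · simp
  set U := Submodule.span ℝ (S - S)
  have : FiniteDimensional ℝ U := FiniteDimensional.span_of_finite ℝ (hfin.sub hfin)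
  let e : U ≃ₗ[ℝ] EuclideanSpace ℝ (Fin (Module.finrank ℝ U)) :=
    LinearEquiv.ofFinrankEq _ _ (by simp)
  obtain ⟨L, hL⟩ := LinearMap.exists_extend e.toLinearMap
  have hLinj : Set.InjOn L U := fun u hu v hv huv ↦ by
    have h : (L ∘ₗ U.subtype) ⟨u, hu⟩ = (L ∘ₗ U.subtype) ⟨v, hv⟩ := huv
    rw [hL] at h
    simpa using e.injective h
  have hLS : Set.InjOn L S := fun s hs t ht hst ↦ by
    have := hLinj (Submodule.subset_span (Set.sub_mem_sub hs ht)) U.zero_mem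
      (by rw [map_sub, hst, sub_self, map_zero])
    exact sub_eq_zero.1 this
  have hspan : Submodule.span ℝ (L '' S - L '' S) = ⊤ := by
    have h := LinearMap.range_comp U.subtype L
    rw [Submodule.range_subtype, hL, LinearEquiv.range] at h
    rw [← Set.image_sub, Submodule.span_image, ← h]
  have hint : (interior (convexHull ℝ (L '' S))).Nonempty := by
    rw [(convex_convexHull ℝ _).interior_nonempty_iff_affineSpan_eq_top, affineSpan_convexHull,
      AffineSubspace.affineSpan_eq_top_iff_vectorSpan_eq_top_of_nonempty ℝ _ _ (hne.image L),
      vectorSpan_def]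
    exact hspan
  have hL' := hS.image hLinj
  calc S.ncard = (L '' S).ncard := hLS.ncard_image.symm
    _ ≤ 2 ^ Module.finrank ℝ (EuclideanSpace ℝ (Fin (Module.finrank ℝ U))) :=
      ncard_le_two_pow_finrank_of_sub_notMem_interior (hfin.image L) hint
        fun s hs t ht hst ↦ hL'.sub_notMem_interior hs ht hst
    _ = 2 ^ Module.finrank ℝ U := by simp

theorem ncard_le_two_pow_finrank_quotient {E : Type*} [AddCommGroup E] [Module ℝ E]
    [FiniteDimensional ℝ E] {D C G : Set E} {V : Submodule ℝ E} (hD : Convex ℝ D)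
    (hC : Convex ℝ C) (h0 : (0 : E) ∈ C) (hneg : ∀ x ∈ C, -x ∈ C)
    (hV : V ≤ Submodule.span ℝ C) (hG : G.Finite)
    (hGC : ∀ s ∈ G, ∀ t ∈ G, (s - t) +ᵥ C ⊆ D)
    (hGD : ∀ s ∈ G, ∀ t ∈ G, s ≠ t → ∀ c : ℝ, 1 < c → c • (s - t) ∉ D) :
    G.ncard ≤ 2 ^ Module.finrank ℝ (E ⧸ V) := by
  have hGG : convexHull ℝ (G - G) ⊆ D := by
    refine convexHull_min ?_ hD
    rintro _ ⟨s, hs, t, ht, rfl⟩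
    simpa using hGC s hs t ht ⟨0, h0, add_zero _⟩
  have hsep : ∀ s ∈ G, ∀ t ∈ G, s ≠ t → ∀ c : ℝ, 1 < c → ∀ x ∈ convexHull ℝ (G - G),
      V.mkQ (c • (s - t)) ≠ V.mkQ x := fun s hs t ht hst c hc x hx h ↦
    smul_sub_notMem_span hD hC h0 hneg (hGC s hs t ht) (hGD s hs t ht hst) (hGG hx) hc
      (hV ((Submodule.Quotient.eq V).1 h))
  have hinj : Set.InjOn V.mkQ G := by
    intro s hs t ht hst
    by_contra hne
    refine hsep s hs t ht hne 2 one_lt_two (s - t) (subset_convexHull ℝ _ ⟨s, hs, t, ht, rfl⟩) ?_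
    simp only [map_smul, map_sub, hst, sub_self, smul_zero]
  have hanti : IsAntipodal (V.mkQ '' G) := by
    rintro _ ⟨s, hs, rfl⟩ _ ⟨t, ht, rfl⟩ hne c hc hmem
    rw [← Set.image_sub, ← LinearMap.image_convexHull] at hmem
    obtain ⟨x, hx, hρx⟩ := hmem
    exact hsep s hs t ht (by rintro rfl; exact hne rfl) c hc x hx (by rw [hρx, map_smul, map_sub])
  calc G.ncard = (V.mkQ '' G).ncard := hinj.ncard_image.symm
    _ ≤ 2 ^ Module.finrank ℝ (Submodule.span ℝ (V.mkQ '' G - V.mkQ '' G)) :=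
      hanti.ncard_le (hG.image _)
    _ ≤ 2 ^ Module.finrank ℝ (E ⧸ V) :=
      Nat.pow_le_pow_right two_pos (Submodule.finrank_le _)

theorem finite_and_ncard_le_of_forall_finite_subset {α : Type*} {T : Set α} {n : ℕ}
    (h : ∀ G ⊆ T, G.Finite → G.ncard ≤ n) : T.Finite ∧ T.ncard ≤ n := by
  have hT : T.Finite := by
    by_contra hinf
    obtain ⟨G, hGT, hG, hcard⟩ := Set.Infinite.exists_subset_ncard_eq hinf (n + 1)
    have := h G hGT hG
    omega
  exact ⟨hT, h T subset_rfl hT⟩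

theorem valence_le_two_pow_general (d k : ℕ) (hk : k ≤ d)
    (P : Set (EuclideanSpace ℝ (Fin d))) (hPconvex : Convex ℝ P)
    (hP0 : (0 : EuclideanSpace ℝ (Fin d)) ∈ interior P)
    (Λ : AddSubgroup (EuclideanSpace ℝ (Fin d)))
    (hpack : ∀ s ∈ Λ, ∀ t ∈ Λ, s ≠ t →
      Disjoint (interior (s +ᵥ P)) (interior (t +ᵥ P)))
    (F : Set (EuclideanSpace ℝ (Fin d))) (hF : F.Nonempty)
    (hdim : Module.finrank ℝ
      (Submodule.span ℝ {x : EuclideanSpace ℝ (Fin d) | ∃ a ∈ F, ∃ b ∈ F, x = a - b})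
      = d - k) :
    {t : EuclideanSpace ℝ (Fin d) | t ∈ Λ ∧ F ⊆ t +ᵥ P}.Finite ∧
      {t : EuclideanSpace ℝ (Fin d) | t ∈ Λ ∧ F ⊆ t +ᵥ P}.ncard ≤ 2 ^ k := by
  set T := {t : EuclideanSpace ℝ (Fin d) | t ∈ Λ ∧ F ⊆ t +ᵥ P}
  have hFF : {x : EuclideanSpace ℝ (Fin d) | ∃ a ∈ F, ∃ b ∈ F, x = a - b} = F - F := by
    ext; simp [Set.mem_sub, eq_comm]
  rw [hFF] at hdim
  have hrank : Module.finrank ℝ (_ ⧸ Submodule.span ℝ (F - F)) = k := by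
    have := (Submodule.span ℝ (F - F)).finrank_quotient_add_finrank
    rw [hdim, finrank_euclideanSpace_fin] at this
    omega
  have hC0 : 0 ∈ convexHull ℝ (F - F) :=
    let ⟨x, hx⟩ := hF; subset_convexHull ℝ _ ⟨x, hx, x, hx, sub_self x⟩
  have hCneg : ∀ x ∈ convexHull ℝ (F - F), -x ∈ convexHull ℝ (F - F) := fun x hx ↦ by
    rwa [← Set.mem_neg, ← convexHull_neg, neg_sub]
  have hTD : ∀ s ∈ T, ∀ t ∈ T, s ≠ t → ∀ c : ℝ, 1 < c → c • (s - t) ∉ P - P := by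
    rintro s ⟨hsΛ, -⟩ t ⟨htΛ, -⟩ hst c hc hmem
    obtain ⟨z, hzP, hz⟩ := hPconvex.interior_inter_interior_vadd_nonempty hP0 hc hmem
    exact Set.disjoint_left.1 (hpack _ (Λ.sub_mem hsΛ htΛ) 0 Λ.zero_mem (sub_ne_zero.2 hst)) hz
      (by rw [zero_vadd]; exact hzP)
  rw [← hrank]
  exact finite_and_ncard_le_of_forall_finite_subset fun G hGT hG ↦
    ncard_le_two_pow_finrank_quotient (hPconvex.sub hPconvex) (convex_convexHull ℝ _) hC0 hCneg
      (Submodule.span_mono (subset_convexHull ℝ _)) hG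
      (fun s hs t ht ↦ hPconvex.vadd_convexHull_sub_subset_sub (hGT hs).2 (hGT ht).2)
      (fun s hs t ht ↦ hTD s (hGT hs) t (hGT ht))

/-- Main theorem: the valence of a face with direction space of dimension `d - k`
in a packing of `ℝ^d` by `Λ`-translates of a compact convex body `P` (with `0` in
its interior) is at most `2 ^ k`. -/
theorem valence_le_two_pow (d k : ℕ) (hk : k ≤ d)
    (P : Set (EuclideanSpace ℝ (Fin d))) (hPcompact : IsCompact P) (hPconvex : Convex ℝ P)
    (hP0 : (0 : EuclideanSpace ℝ (Fin d)) ∈ interior P)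
    (Λ : AddSubgroup (EuclideanSpace ℝ (Fin d)))
    (hpack : ∀ s ∈ Λ, ∀ t ∈ Λ, s ≠ t →
      Disjoint (interior (s +ᵥ P)) (interior (t +ᵥ P)))
    (F : Set (EuclideanSpace ℝ (Fin d))) (hF : F.Nonempty)
    (hdim : Module.finrank ℝ
      (Submodule.span ℝ {x : EuclideanSpace ℝ (Fin d) | ∃ a ∈ F, ∃ b ∈ F, x = a - b})
      = d - k) :
    {t : EuclideanSpace ℝ (Fin d) | t ∈ Λ ∧ F ⊆ t +ᵥ P}.Finite ∧
      {t : EuclideanSpace ℝ (Fin d) | t ∈ Λ ∧ F ⊆ t +ᵥ P}.ncard ≤ 2 ^ k :=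
  valence_le_two_pow_general d k hk P hPconvex hP0 Λ hpack F hF hdim
end

section
/- Let W be a finite antipodal set in ℝ^k, let C = conv(W) be its convex hull, and let a be a real number with 0 < a < 1/2. Then for any two distinct points x, y ∈ W, the homothetic images x + a·(C − x) and y + a·(C − y) are disjoint. -/
/-- For an antipodal set `W` and `0 < a < 1/2`, the homothetic copies of `conv W`
with ratio `a` centered at two distinct points of `W` are disjoint. -/
theorem antipodal_homothety_disjoint (k : ℕ) (W : Finset (EuclideanSpace ℝ (Fin k)))
    (hW : ∀ x ∈ W, ∀ y ∈ W, x ≠ y →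
      ∃ f : EuclideanSpace ℝ (Fin k) →ₗ[ℝ] ℝ, f ≠ 0 ∧ f x < f y ∧
        ∀ w ∈ W, f x ≤ f w ∧ f w ≤ f y)
    (a : ℝ) (ha0 : 0 < a) (ha : a < 1 / 2)
    (x y : EuclideanSpace ℝ (Fin k)) (hx : x ∈ W) (hy : y ∈ W) (hxy : x ≠ y) :
    Disjoint
      ((fun c => x + a • (c - x)) '' convexHull ℝ (W : Set (EuclideanSpace ℝ (Fin k))))
      ((fun c => y + a • (c - y)) '' convexHull ℝ (W : Set (EuclideanSpace ℝ (Fin k)))) := by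
  obtain ⟨f, -, hlt, hbd⟩ := hW x hx y hy hxy
  have hbd' : ∀ c ∈ convexHull ℝ (W : Set (EuclideanSpace ℝ (Fin k))),
      f x ≤ f c ∧ f c ≤ f y := by
    intro c hc
    have : c ∈ {p | f x ≤ f p ∧ f p ≤ f y} := by
      refine convexHull_min ?_ ?_ hc
      · intro w hw; exact hbd w hw
      · intro p hp q hq s t hs ht hst
        constructor
        · have := add_le_add (mul_le_mul_of_nonneg_left hp.1 hs)
            (mul_le_mul_of_nonneg_left hq.1 ht)
          have e : s * f x + t * f x = f x := by rw [← add_mul, hst, one_mul]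
          simp only [map_add, map_smul, smul_eq_mul]
          linarith
        · have := add_le_add (mul_le_mul_of_nonneg_left hp.2 hs)
            (mul_le_mul_of_nonneg_left hq.2 ht)
          have e : s * f y + t * f y = f y := by rw [← add_mul, hst, one_mul]
          simp only [map_add, map_smul, smul_eq_mul]
          linarith
    exact this
  rw [Set.disjoint_left]
  rintro p ⟨c, hc, rfl⟩ ⟨d, hd, hpd⟩
  have h1 : f (x + a • (c - x)) ≤ f x + a * (f y - f x) := by
    simp only [map_add, map_smul, map_sub, smul_eq_mul]
    nlinarith [(hbd' c hc).2]
  have h2 : f y - a * (f y - f x) ≤ f (y + a • (d - y)) := by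
    simp only [map_add, map_smul, map_sub, smul_eq_mul]
    nlinarith [(hbd' d hd).1]
  have h3 : f (y + a • (d - y)) = f (x + a • (c - x)) := congrArg f hpd
  nlinarith
end

section
/- Let P be a compact convex subset of ℝ^d with nonempty interior satisfying P = −P, and let Λ be an additive subgroup of ℝ^d such that the translates P + t, for t ∈ Λ, have pairwise disjoint interiors and cover ℝ^d. If t₁, t₂ ∈ Λ are distinct and t₁ − t₂ ∈ 2Λ (i.e., t₁ and t₂ belong to the same parity class modulo 2Λ), then (P + t₁) ∩ (P + t₂) = ∅. -/
/-!
If the tiles at `t₁` and `t₂` meet, central symmetry and convexity put the midpoint `m` of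
`t₁` and `t₂` into both of them. When `t₁ - t₂ ∈ 2Λ`, `m` is itself a lattice point, so it lies in the
interior of its own tile; that open set then meets the interior of the tile at `t₁ ≠ m`,
contradicting the packing condition.
-/

open Pointwise

theorem neg_mem_interior_of_neg_eq {G : Type*} [TopologicalSpace G] [InvolutiveNeg G]
    [ContinuousNeg G] {s : Set G} (hsymm : -s = s) {x : G} (hx : x ∈ interior s) :
    -x ∈ interior s := by
  rw [← hsymm, ← Set.neg_preimage]
  change -x ∈ interior (Homeomorph.neg G ⁻¹' s)
  rw [← Homeomorph.preimage_interior]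
  simpa using hx

section

variable {E : Type*} [AddCommGroup E] [Module ℝ E]

theorem Convex.midpoint_mem_vadd_of_mem_inter {s : Set E} (hs : Convex ℝ s) (hsymm : -s = s)
    {a b x : E} (ha : x ∈ a +ᵥ s) (hb : x ∈ b +ᵥ s) : midpoint ℝ a b ∈ a +ᵥ s := by
  rw [Set.mem_vadd_set_iff_neg_vadd_mem, vadd_eq_add] at ha hb ⊢
  have hb' : b - x ∈ s := by
    rw [← hsymm, Set.mem_neg]
    simpa [neg_add_eq_sub] using hb
  convert hs.midpoint_mem ha hb' using 1
  simp only [midpoint_eq_smul_add, invOf_eq_inv]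
  module

variable [TopologicalSpace E] [IsTopologicalAddGroup E] [ContinuousSMul ℝ E]

theorem Convex.zero_mem_interior_of_neg_eq {s : Set E} (hs : Convex ℝ s) (hsymm : -s = s)
    (hint : (interior s).Nonempty) : (0 : E) ∈ interior s := by
  obtain ⟨x, hx⟩ := hint
  simpa using hs.interior.midpoint_mem hx (neg_mem_interior_of_neg_eq hsymm hx)

theorem Convex.not_disjoint_interior_vadd_of_mem {s : Set E} (hs : Convex ℝ s)
    (h0 : (0 : E) ∈ interior s) {a b : E} (hab : a ∈ b +ᵥ s) :
    ¬Disjoint (interior (a +ᵥ s)) (interior (b +ᵥ s)) := by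
  have ha : a ∈ interior (a +ᵥ s) := by
    rw [interior_vadd]
    exact ⟨0, h0, add_zero a⟩
  have hb : a ∈ closure (interior (b +ᵥ s)) := by
    rw [(hs.vadd b).closure_interior_eq_closure_of_nonempty_interior
      (by rw [interior_vadd]; exact Set.Nonempty.vadd_set ⟨0, h0⟩)]
    exact subset_closure hab
  rw [Set.not_disjoint_iff_nonempty_inter]
  exact mem_closure_iff.mp hb _ isOpen_interior ha

end

theorem parity_lemma_general (d : ℕ) (P : Set (EuclideanSpace ℝ (Fin d)))
    (hPconvex : Convex ℝ P)
    (hPint : (interior P).Nonempty) (hPsymm : P = -P)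
    (Λ : AddSubgroup (EuclideanSpace ℝ (Fin d)))
    (hpack : ∀ s ∈ Λ, ∀ t ∈ Λ, s ≠ t →
      Disjoint (interior (s +ᵥ P)) (interior (t +ᵥ P)))
    (t₁ t₂ : EuclideanSpace ℝ (Fin d)) (h₁ : t₁ ∈ Λ) (h₂ : t₂ ∈ Λ) (hne : t₁ ≠ t₂)
    (hpar : ∃ u ∈ Λ, t₁ - t₂ = 2 • u) :
    (t₁ +ᵥ P) ∩ (t₂ +ᵥ P) = ∅ := by
  by_contra hmeet
  obtain ⟨x, hx₁, hx₂⟩ := Set.nonempty_iff_ne_empty.mpr hmeet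
  obtain ⟨u, hu, htu⟩ := hpar
  have hmid : midpoint ℝ t₁ t₂ = t₂ + u := by
    rw [midpoint_eq_smul_add, invOf_eq_inv, sub_eq_iff_eq_add.mp htu]
    module
  have hmidΛ : midpoint ℝ t₁ t₂ ∈ Λ := hmid ▸ Λ.add_mem h₂ hu
  have hmid_ne : midpoint ℝ t₁ t₂ ≠ t₁ := fun h => hne ((midpoint_eq_left_iff ℝ).mp h)
  exact hPconvex.not_disjoint_interior_vadd_of_mem
    (hPconvex.zero_mem_interior_of_neg_eq hPsymm.symm hPint)
    (hPconvex.midpoint_mem_vadd_of_mem_inter hPsymm.symm hx₁ hx₂)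
    (hpack _ hmidΛ t₁ h₁ hmid_ne)

/-- The parity lemma: in a tiling of `ℝ^d` by `Λ`-translates of a centrally symmetric
compact convex body `P`, two distinct tiles whose centers agree modulo `2Λ` are disjoint. -/
theorem parity_lemma (d : ℕ) (P : Set (EuclideanSpace ℝ (Fin d)))
    (hPcompact : IsCompact P) (hPconvex : Convex ℝ P)
    (hPint : (interior P).Nonempty) (hPsymm : P = -P)
    (Λ : AddSubgroup (EuclideanSpace ℝ (Fin d)))
    (hpack : ∀ s ∈ Λ, ∀ t ∈ Λ, s ≠ t →
      Disjoint (interior (s +ᵥ P)) (interior (t +ᵥ P)))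
    (hcover : (⋃ t ∈ (Λ : Set (EuclideanSpace ℝ (Fin d))), t +ᵥ P) = Set.univ)
    (t₁ t₂ : EuclideanSpace ℝ (Fin d)) (h₁ : t₁ ∈ Λ) (h₂ : t₂ ∈ Λ) (hne : t₁ ≠ t₂)
    (hpar : ∃ u ∈ Λ, t₁ - t₂ = 2 • u) :
    (t₁ +ᵥ P) ∩ (t₂ +ᵥ P) = ∅ :=
  parity_lemma_general d P hPconvex hPint hPsymm Λ hpack t₁ t₂ h₁ h₂ hne hpar
end

section
/- Let Λ be an additive subgroup of a real inner product space E, and let s₁, s₂ ∈ Λ be distinct points with s₁ − s₂ ∈ 2Λ (equivalently, (s₁ + s₂)/2 ∈ Λ). Then the Voronoi cells of s₁ and s₂ with respect to Λ are disjoint: there is no point x ∈ E satisfying both ‖x − s₁‖ ≤ ‖x − l‖ for all l ∈ Λ and ‖x − s₂‖ ≤ ‖x − l‖ for all l ∈ Λ. -/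
/-!
Since `s₁ - s₂ = 2u` with `u ∈ Λ`, the midpoint of `s₁` and `s₂` is the lattice point `s₂ + u`.
By strict convexity of the norm it is strictly closer to every `x` than the farther of `s₁`, `s₂`,
so `x` cannot lie in both Voronoi cells.
-/

theorem midpoint_eq_add_of_sub_eq_two_nsmul {E : Type*} [AddCommGroup E] [Module ℝ E]
    {a b u : E} (h : a - b = 2 • u) : midpoint ℝ a b = b + u := by
  rw [sub_eq_iff_eq_add, two_nsmul] at h
  rw [midpoint_eq_smul_add, invOf_eq_inv, h]
  module

section StrictConvex

variable {E : Type*} [NormedAddCommGroup E] [NormedSpace ℝ E] [StrictConvexSpace ℝ E]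

theorem norm_sub_midpoint_lt_max (x : E) {a b : E} (hne : a ≠ b) :
    ‖x - midpoint ℝ a b‖ < max ‖x - a‖ ‖x - b‖ := by
  have hcombo : x - midpoint ℝ a b = (1 / 2 : ℝ) • (x - a) + (1 / 2 : ℝ) • (x - b) := by
    rw [midpoint_eq_smul_add, invOf_eq_inv]
    module
  rw [hcombo]
  exact norm_combo_lt_of_ne (le_max_left _ _) (le_max_right _ _)
    (fun h => hne (sub_right_injective h)) one_half_pos one_half_pos (add_halves 1)

def voronoiCell (S : Set E) (s : E) : Set E := {x | ∀ l ∈ S, ‖x - s‖ ≤ ‖x - l‖}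

theorem disjoint_voronoiCell_of_midpoint_mem {S : Set E} {s₁ s₂ : E} (hne : s₁ ≠ s₂)
    (hmid : midpoint ℝ s₁ s₂ ∈ S) : Disjoint (voronoiCell S s₁) (voronoiCell S s₂) :=
  Set.disjoint_left.2 fun x hx₁ hx₂ =>
    (max_le (hx₁ _ hmid) (hx₂ _ hmid)).not_gt (norm_sub_midpoint_lt_max x hne)

end StrictConvex

theorem voronoi_parity_disjoint_general (E : Type*) [NormedAddCommGroup E] [InnerProductSpace ℝ E]
    (Λ : AddSubgroup E) (s₁ s₂ : E) (h₂ : s₂ ∈ Λ) (hne : s₁ ≠ s₂)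
    (hpar : ∃ u ∈ Λ, s₁ - s₂ = 2 • u) :
    ¬ ∃ x : E, (∀ l ∈ Λ, ‖x - s₁‖ ≤ ‖x - l‖) ∧ (∀ l ∈ Λ, ‖x - s₂‖ ≤ ‖x - l‖) := by
  obtain ⟨u, hu, hsub⟩ := hpar
  have hmid : midpoint ℝ s₁ s₂ ∈ Λ :=
    midpoint_eq_add_of_sub_eq_two_nsmul hsub ▸ Λ.add_mem h₂ hu
  have hdisj : Disjoint (voronoiCell (Λ : Set E) s₁) (voronoiCell Λ s₂) :=
    disjoint_voronoiCell_of_midpoint_mem hne hmid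
  rintro ⟨x, hx₁, hx₂⟩
  exact Set.disjoint_left.1 hdisj hx₁ hx₂

/-- The parity lemma for Voronoi cells: if `s₁ ≠ s₂` lie in `Λ` and in the same
class modulo `2Λ`, then their Voronoi cells with respect to `Λ` are disjoint. -/
theorem voronoi_parity_disjoint (E : Type*) [NormedAddCommGroup E] [InnerProductSpace ℝ E]
    (Λ : AddSubgroup E) (s₁ s₂ : E) (h₁ : s₁ ∈ Λ) (h₂ : s₂ ∈ Λ) (hne : s₁ ≠ s₂)
    (hpar : ∃ u ∈ Λ, s₁ - s₂ = 2 • u) :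
    ¬ ∃ x : E, (∀ l ∈ Λ, ‖x - s₁‖ ≤ ‖x - l‖) ∧ (∀ l ∈ Λ, ‖x - s₂‖ ≤ ‖x - l‖) :=
  voronoi_parity_disjoint_general E Λ s₁ s₂ h₂ hne hpar
end

section
/- Let Λ be an additive subgroup of a real inner product space E, let x ∈ E, and let S = {s ∈ Λ : ‖x − s‖ ≤ ‖x − l‖ for all l ∈ Λ} be the set of points of Λ nearest to x. Then the reduction map modulo 2Λ is injective on S: any two distinct elements of S lie in different classes of Λ modulo 2Λ. -/
/-- Reduction modulo `2Λ` is injective on the set of points of `Λ` nearest to a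
given point `x`. -/
theorem nearest_points_injective_mod_two (E : Type*) [NormedAddCommGroup E]
    [InnerProductSpace ℝ E] (Λ : AddSubgroup E) (x : E) :
    ∀ s₁ ∈ {s : E | s ∈ Λ ∧ ∀ l ∈ Λ, ‖x - s‖ ≤ ‖x - l‖},
      ∀ s₂ ∈ {s : E | s ∈ Λ ∧ ∀ l ∈ Λ, ‖x - s‖ ≤ ‖x - l‖},
        (∃ u ∈ Λ, s₁ - s₂ = 2 • u) → s₁ = s₂ := by
  rintro s₁ ⟨hs₁, hmin₁⟩ s₂ ⟨hs₂, hmin₂⟩ ⟨u, hu, huv⟩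
  -- the midpoint m = s₂ + u lies in Λ
  set m : E := s₂ + u with hm
  have hmΛ : m ∈ Λ := Λ.add_mem hs₂ hu
  have heq : ‖x - s₁‖ = ‖x - s₂‖ :=
    le_antisymm (hmin₁ s₂ hs₂) (hmin₂ s₁ hs₁)
  have hpar := parallelogram_law_with_norm ℝ (x - s₁) (x - s₂)
  have hsum : (x - s₁) + (x - s₂) = (2 : ℝ) • (x - m) := by
    have : s₁ = s₂ + 2 • u := by
      have := huv; rw [sub_eq_iff_eq_add] at this; rw [this]; abel
    rw [this, hm]
    simp [two_smul]
    abel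
  have hdiff : (x - s₁) - (x - s₂) = s₂ - s₁ := by abel
  rw [hsum, hdiff, norm_smul, heq] at hpar
  have hmge : ‖x - s₂‖ ≤ ‖x - m‖ := hmin₂ m hmΛ
  have h0 : ‖s₂ - s₁‖ ^ 2 ≤ 0 := by
    have h4 : (‖(2:ℝ)‖ * ‖x - m‖) * (‖(2:ℝ)‖ * ‖x - m‖) = 4 * ‖x - m‖ ^ 2 := by
      simp [Real.norm_ofNat]; ring
    nlinarith [norm_nonneg (x - m), norm_nonneg (x - s₂), sq_nonneg (‖x - m‖ - ‖x - s₂‖)]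
  have : ‖s₂ - s₁‖ = 0 := by
    nlinarith [norm_nonneg (s₂ - s₁)]
  have := norm_eq_zero.mp this
  exact (sub_eq_zero.mp this).symm
end

section
/- Let Λ be a full-rank lattice in ℝ^d (a discrete additive subgroup whose ℝ-span is ℝ^d), and let x ∈ ℝ^d. Then the set S = {s ∈ Λ : ‖x − s‖ ≤ ‖x − l‖ for all l ∈ Λ} of lattice points nearest to x is finite and has at most 2^d elements. -/
/-!
Two nearest lattice points `s ≠ s'` with `s ≡ s' (mod 2Λ)` cannot exist: their midpoint lies in
`Λ` and, by strict convexity of the norm, is strictly nearer to `x`. So the nearest points lie in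
distinct classes of `Λ / 2Λ`, of which there are `2 ^ d`.
-/

open Module

theorem AddSubgroup.finite_and_ncard_le_index {M : Type*} [AddCommGroup M] (H : AddSubgroup M)
    [H.FiniteIndex] {S : Set M} (hS : ∀ a ∈ S, ∀ b ∈ S, a - b ∈ H → a = b) :
    S.Finite ∧ S.ncard ≤ H.index := by
  have hinj : S.InjOn (QuotientAddGroup.mk : M → M ⧸ H) := fun a ha b hb hab =>
    hS a ha b hb (QuotientAddGroup.eq_iff_sub_mem.mp hab)
  refine ⟨Set.Finite.of_finite_image (Set.toFinite _) hinj, ?_⟩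
  rw [← hinj.ncard_image, AddSubgroup.index]
  exact Set.ncard_le_card _

theorem ZLattice.index_range_nsmul {E : Type*} [NormedAddCommGroup E] [NormedSpace ℝ E]
    [FiniteDimensional ℝ E] (Λ : AddSubgroup E) [DiscreteTopology Λ]
    (hfull : Submodule.span ℝ (Λ : Set E) = ⊤) (n : ℕ) :
    (nsmulAddMonoidHom (α := Λ) n).range.index = n ^ finrank ℝ E := by
  have : DiscreteTopology Λ.toIntSubmodule := ‹_›
  have : IsZLattice ℝ Λ.toIntSubmodule := ⟨hfull⟩
  have : Free ℤ Λ := ZLattice.module_free ℝ Λ.toIntSubmodule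
  have : Module.Finite ℤ Λ := ZLattice.module_finite ℝ Λ.toIntSubmodule
  rw [AddSubgroup.index_range_nsmul]
  exact congrArg _ (ZLattice.rank ℝ Λ.toIntSubmodule)

theorem eq_of_forall_norm_sub_le_of_sub_eq_two_nsmul {E : Type*} [NormedAddCommGroup E]
    [NormedSpace ℝ E] [StrictConvexSpace ℝ E] {G : AddSubgroup E} {x s s' t : E}
    (hs : s ∈ G) (hs' : s' ∈ G) (ht : t ∈ G)
    (hs_min : ∀ l ∈ G, ‖x - s‖ ≤ ‖x - l‖) (hs'_min : ∀ l ∈ G, ‖x - s'‖ ≤ ‖x - l‖)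
    (hst : s - s' = 2 • t) : s = s' := by
  by_contra hne
  have hrad : ‖x - s‖ = ‖x - s'‖ := le_antisymm (hs_min s' hs') (hs'_min s hs)
  have hmid : x - (s' + t) = (1 / 2 : ℝ) • ((x - s) + (x - s')) := by
    rw [eq_add_of_sub_eq hst]
    module
  have hlt : ‖x - (s' + t)‖ < ‖x - s‖ := by
    rw [hmid, norm_midpoint_lt_iff hrad]
    simpa using hne
  exact (hs_min _ (G.add_mem hs' ht)).not_gt hlt

/-- The Voronoi case of the main theorem: the set of points of a full-rank lattice
`Λ ⊆ ℝ^d` nearest to a given point `x` is finite and has at most `2 ^ d` elements. -/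
theorem nearest_lattice_points_card_le (d : ℕ) (Λ : AddSubgroup (EuclideanSpace ℝ (Fin d)))
    [DiscreteTopology Λ]
    (hfull : Submodule.span ℝ (Λ : Set (EuclideanSpace ℝ (Fin d))) = ⊤)
    (x : EuclideanSpace ℝ (Fin d)) :
    {s : EuclideanSpace ℝ (Fin d) | s ∈ Λ ∧ ∀ l ∈ Λ, ‖x - s‖ ≤ ‖x - l‖}.Finite ∧
      {s : EuclideanSpace ℝ (Fin d) | s ∈ Λ ∧ ∀ l ∈ Λ, ‖x - s‖ ≤ ‖x - l‖}.ncard ≤ 2 ^ d := by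
  have hindex : (nsmulAddMonoidHom (α := Λ) 2).range.index = 2 ^ d := by
    rw [ZLattice.index_range_nsmul Λ hfull, finrank_euclideanSpace_fin]
  have : (nsmulAddMonoidHom (α := Λ) 2).range.FiniteIndex := ⟨by simp [hindex]⟩
  set T : Set Λ := {s | ∀ l ∈ Λ, ‖x - s‖ ≤ ‖x - l‖}
  have hST : {s | s ∈ Λ ∧ ∀ l ∈ Λ, ‖x - s‖ ≤ ‖x - l‖} = Subtype.val '' T := by
    ext s
    exact ⟨fun ⟨hs, hmin⟩ => ⟨⟨s, hs⟩, hmin, rfl⟩, by rintro ⟨s, hmin, rfl⟩; exact ⟨s.2, hmin⟩⟩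
  obtain ⟨hfin, hcard⟩ := (nsmulAddMonoidHom (α := Λ) 2).range.finite_and_ncard_le_index
    (S := T) fun a ha b hb ⟨t, hab⟩ => Subtype.ext <|
      eq_of_forall_norm_sub_le_of_sub_eq_two_nsmul a.2 b.2 t.2 ha hb <| by
        simpa using congrArg Subtype.val hab.symm
  rw [hST, Set.ncard_image_of_injective _ Subtype.val_injective, ← hindex]
  exact ⟨hfin.image _, hcard⟩
end

section
/- Let Λ be a full-rank lattice in ℝ^d (a discrete additive subgroup whose ℝ-span is ℝ^d), let x ∈ ℝ^d, and let S = {s ∈ Λ : ‖x − s‖ ≤ ‖x − l‖ for all l ∈ Λ} be the set of lattice points nearest to x. If the affine span of S has dimension k, then S has at most 2^k elements. -/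
/-!
If `s, s'` are nearest lattice points to `x` and `s - s' = 2m` with `m ∈ Λ`, then `s' + m ∈ Λ` is the
midpoint of `s` and `s'`, which by strict convexity of the norm is strictly closer to `x` unless
`s = s'`. Hence `s ↦ s - s₀` embeds `S` into `N / 2N`, where `N` is the `ℤ`-span of `S - s₀`.
Being a discrete subgroup, `N` is free of `ℤ`-rank equal to the real dimension of its span, which is
the direction of the affine span of `S`; so `N / 2N` has `2 ^ k` elements.
-/

open Module Submodule

variable {E : Type*} [NormedAddCommGroup E] [NormedSpace ℝ E]

def nearestPoints (Λ : AddSubgroup E) (x : E) : Set E :=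
  {s | s ∈ Λ ∧ ∀ l ∈ Λ, ‖x - s‖ ≤ ‖x - l‖}

theorem eq_of_mem_nearestPoints_of_sub_eq_two_zsmul [StrictConvexSpace ℝ E] {Λ : AddSubgroup E}
    {x s s' m : E} (hs : s ∈ nearestPoints Λ x) (hs' : s' ∈ nearestPoints Λ x) (hm : m ∈ Λ)
    (h : s - s' = (2 : ℤ) • m) : s = s' := by
  by_contra hne
  have hnorm : ‖x - s‖ = ‖x - s'‖ := le_antisymm (hs.2 _ hs'.1) (hs'.2 _ hs.1)
  have hmid : x - (s' + m) = (1 / 2 : ℝ) • ((x - s) + (x - s')) := by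
    rw [sub_eq_iff_eq_add'.mp h]
    module
  have hlt : ‖x - (s' + m)‖ < ‖x - s‖ := by
    rw [hmid, norm_midpoint_lt_iff hnorm]
    exact fun h' => hne (sub_right_injective h')
  exact (hs.2 _ (add_mem hs'.1 hm)).not_gt hlt

theorem ModN.mkQ_eq_mkQ_iff {G : Type*} [AddCommGroup G] {n : ℕ} {a b : G} :
    ModN.mkQ n a = ModN.mkQ n b ↔ ∃ m, a - b = (n : ℤ) • m := by
  simp [ModN.mkQ, Submodule.Quotient.eq, eq_comm]

theorem finrank_span_int_image_sub_eq [FiniteDimensional ℝ E] {S : Set E} {s₀ : E} (hs₀ : s₀ ∈ S)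
    (hS : DiscreteTopology (span ℤ ((· - s₀) '' S))) :
    finrank ℤ (span ℤ ((· - s₀) '' S)) = finrank ℝ (affineSpan ℝ S).direction := by
  rw [direction_affineSpan, vectorSpan_eq_span_vsub_set_right ℝ hs₀]
  exact (Real.finrank_eq_int_finrank_of_discrete hS).symm

theorem nearestPoints_finite_and_ncard_le [FiniteDimensional ℝ E] [StrictConvexSpace ℝ E]
    (Λ : AddSubgroup E) [DiscreteTopology Λ] (x : E) :
    (nearestPoints Λ x).Finite ∧
      (nearestPoints Λ x).ncard ≤ 2 ^ finrank ℝ (affineSpan ℝ (nearestPoints Λ x)).direction := by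
  set S := nearestPoints Λ x
  rcases S.eq_empty_or_nonempty with hS | ⟨s₀, hs₀⟩
  · simp [hS]
  set N := span ℤ ((· - s₀) '' S)
  have hNΛ : (N : Set E) ⊆ Λ := by
    refine span_le (p := Λ.toIntSubmodule).mpr ?_
    rintro _ ⟨s, hs, rfl⟩
    exact sub_mem hs.1 hs₀.1
  have hNdisc : DiscreteTopology N := DiscreteTopology.of_subset (s := (Λ : Set E)) ‹_› hNΛ
  let f : S → ModN N 2 := fun s => ModN.mkQ 2 ⟨s - s₀, subset_span ⟨s, s.2, rfl⟩⟩
  have hf : Function.Injective f := by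
    intro s s' hss'
    obtain ⟨m, hm⟩ := ModN.mkQ_eq_mkQ_iff.mp hss'
    refine Subtype.ext <| eq_of_mem_nearestPoints_of_sub_eq_two_zsmul s.2 s'.2 (hNΛ m.2) ?_
    simpa using congrArg Subtype.val hm
  refine ⟨Set.finite_coe_iff.mp (Finite.of_injective f hf), ?_⟩
  calc S.ncard = Nat.card S := (Nat.card_coe_set_eq S).symm
    _ ≤ Nat.card (ModN N 2) := Nat.card_le_card_of_injective f hf
    _ = 2 ^ finrank ℝ (affineSpan ℝ S).direction := by
      rw [ModN.natCard_eq, finrank_span_int_image_sub_eq hs₀ hNdisc]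

theorem nearest_lattice_points_card_le_affDim_general (d k : ℕ)
    (Λ : AddSubgroup (EuclideanSpace ℝ (Fin d))) [DiscreteTopology Λ]
    (x : EuclideanSpace ℝ (Fin d))
    (hdim : Module.finrank ℝ
      (affineSpan ℝ {s : EuclideanSpace ℝ (Fin d) |
        s ∈ Λ ∧ ∀ l ∈ Λ, ‖x - s‖ ≤ ‖x - l‖}).direction = k) :
    {s : EuclideanSpace ℝ (Fin d) | s ∈ Λ ∧ ∀ l ∈ Λ, ‖x - s‖ ≤ ‖x - l‖}.Finite ∧
      {s : EuclideanSpace ℝ (Fin d) | s ∈ Λ ∧ ∀ l ∈ Λ, ‖x - s‖ ≤ ‖x - l‖}.ncard ≤ 2 ^ k :=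
  hdim ▸ nearestPoints_finite_and_ncard_le Λ x

/-- Refined Voronoi case: if the affine span of the set `S` of lattice points of a
full-rank lattice `Λ ⊆ ℝ^d` nearest to `x` has dimension `k`, then `S` has at most
`2 ^ k` elements. -/
theorem nearest_lattice_points_card_le_affDim (d k : ℕ)
    (Λ : AddSubgroup (EuclideanSpace ℝ (Fin d))) [DiscreteTopology Λ]
    (hfull : Submodule.span ℝ (Λ : Set (EuclideanSpace ℝ (Fin d))) = ⊤)
    (x : EuclideanSpace ℝ (Fin d))
    (hdim : Module.finrank ℝ
      (affineSpan ℝ {s : EuclideanSpace ℝ (Fin d) |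
        s ∈ Λ ∧ ∀ l ∈ Λ, ‖x - s‖ ≤ ‖x - l‖}).direction = k) :
    {s : EuclideanSpace ℝ (Fin d) | s ∈ Λ ∧ ∀ l ∈ Λ, ‖x - s‖ ≤ ‖x - l‖}.Finite ∧
      {s : EuclideanSpace ℝ (Fin d) | s ∈ Λ ∧ ∀ l ∈ Λ, ‖x - s‖ ≤ ‖x - l‖}.ncard ≤ 2 ^ k :=
  nearest_lattice_points_card_le_affDim_general d k Λ x hdim
end

section
/- Let P be a compact convex set in ℝ^d with 0 in its interior, and let Λ be an additive subgroup of ℝ^d such that the translates P + t, for t ∈ Λ, have pairwise disjoint interiors. Let F be a nonempty subset of ℝ^d, let V be the linear span of all differences x − y with x, y ∈ F, and let T = {t ∈ Λ : F + t ⊆ P}. Then for every pair of distinct elements s, t ∈ T there exists a nonzero continuous linear functional f : ℝ^d → ℝ vanishing on V such that f(s) < f(t) and f(s) ≤ f(u) ≤ f(t) for all u ∈ T. In particular, the image of T under the orthogonal projection π onto the orthogonal complement of V is an antipodal set. -/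
/-!
The tiles `P` and `(t - s) +ᵥ P` have disjoint interiors, so some hyperplane `f = c` separates
them: `f ≤ c` on `P` and `c ≤ f` on `(t - s) +ᵥ P`. Both tiles contain `t +ᵥ F`
(as `s +ᵥ F ⊆ P`), so `f = c` on `t +ᵥ F`; hence `f` is constant on `F` and vanishes on its
direction space. For `u ∈ T`, the sets `u +ᵥ F ⊆ P` and `(u + t - s) +ᵥ F ⊆ (t - s) +ᵥ P`
squeeze `f u` between `f s` and `f t`. Finally `f s < f t` because `f 0 < c` (as `0` is interior
to `P`) while `t - s` lies in the second tile.
-/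

open Pointwise Set

section Separation

variable {E : Type*} [TopologicalSpace E] [AddCommGroup E] [IsTopologicalAddGroup E]
  [Module ℝ E] [ContinuousSMul ℝ E] {s t : Set E}

theorem Convex.subset_closure_interior (hs : Convex ℝ s) (hsint : (interior s).Nonempty) :
    s ⊆ closure (interior s) := by
  rw [hs.closure_interior_eq_closure_of_nonempty_interior hsint]
  exact subset_closure

theorem geometric_hahn_banach_of_disjoint_interior (hs : Convex ℝ s) (ht : Convex ℝ t)
    (hsint : (interior s).Nonempty) (htint : (interior t).Nonempty)
    (hst : Disjoint (interior s) (interior t)) :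
    ∃ (f : StrongDual ℝ E) (u : ℝ),
      (∀ a ∈ interior s, f a < u) ∧ (∀ a ∈ s, f a ≤ u) ∧ ∀ b ∈ t, u ≤ f b := by
  obtain ⟨f, u, hfs, hft⟩ :=
    geometric_hahn_banach_open_open hs.interior isOpen_interior ht.interior isOpen_interior hst
  refine ⟨f, u, hfs, fun a ha => ?_, fun b hb => ?_⟩
  · exact closure_minimal (fun x hx => (hfs x hx).le) (isClosed_Iic.preimage f.continuous)
      (hs.subset_closure_interior hsint ha)
  · exact closure_minimal (fun x hx => (hft x hx).le) (isClosed_Ici.preimage f.continuous)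
      (ht.subset_closure_interior htint hb)

end Separation

theorem LinearMap.map_eq_zero_of_mem_span_sub {R M N : Type*} [Ring R] [AddCommGroup M]
    [Module R M] [AddCommGroup N] [Module R N] {f : M →ₗ[R] N} {F : Set M}
    (hf : ∀ a ∈ F, ∀ b ∈ F, f a = f b) :
    ∀ v ∈ Submodule.span R {x : M | ∃ a ∈ F, ∃ b ∈ F, x = a - b}, f v = 0 := by
  refine fun v hv => (Submodule.span_le (p := LinearMap.ker f)).2 ?_ hv
  rintro _ ⟨a, ha, b, hb, rfl⟩
  rw [SetLike.mem_coe, LinearMap.mem_ker, map_sub, hf a ha b hb, sub_self]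

section Translates

variable {E 𝓕 : Type*} [AddCommGroup E] [FunLike 𝓕 E ℝ] [AddMonoidHomClass 𝓕 E ℝ]
  {f : 𝓕} {c : ℝ} {P F : Set E} {s t u a : E}

theorem map_add_eq_of_vadd_subset (hP : ∀ x ∈ P, f x ≤ c) (hQ : ∀ x ∈ P, c ≤ f (t - s + x))
    (hs : s +ᵥ F ⊆ P) (ht : t +ᵥ F ⊆ P) (ha : a ∈ F) : f t + f a = c := by
  have hle : f (t + a) ≤ c := hP _ (ht (vadd_mem_vadd_set ha))
  have hge : c ≤ f (t - s + (s + a)) := hQ _ (hs (vadd_mem_vadd_set ha))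
  rw [← add_assoc, sub_add_cancel] at hge
  rw [← map_add]
  exact hle.antisymm hge

theorem map_mem_Icc_of_vadd_subset (hP : ∀ x ∈ P, f x ≤ c) (hQ : ∀ x ∈ P, c ≤ f (t - s + x))
    (hs : s +ᵥ F ⊆ P) (ht : t +ᵥ F ⊆ P) (ha : a ∈ F) (hu : u +ᵥ F ⊆ P) :
    f u ∈ Icc (f s) (f t) := by
  have hta := map_add_eq_of_vadd_subset hP hQ hs ht ha
  have hle : f (u + a) ≤ c := hP _ (hu (vadd_mem_vadd_set ha))
  have hge : c ≤ f (t - s + (u + a)) := hQ _ (hu (vadd_mem_vadd_set ha))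
  simp only [map_add, map_sub] at hle hge
  constructor <;> linarith

end Translates

theorem antipodal_functional_of_packing_general (d : ℕ)
    (P : Set (EuclideanSpace ℝ (Fin d))) (hPconvex : Convex ℝ P)
    (hP0 : (0 : EuclideanSpace ℝ (Fin d)) ∈ interior P)
    (Λ : AddSubgroup (EuclideanSpace ℝ (Fin d)))
    (hpack : ∀ s ∈ Λ, ∀ t ∈ Λ, s ≠ t →
      Disjoint (interior (s +ᵥ P)) (interior (t +ᵥ P)))
    (F : Set (EuclideanSpace ℝ (Fin d))) (hF : F.Nonempty)
    (s t : EuclideanSpace ℝ (Fin d))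
    (hs : s ∈ {u : EuclideanSpace ℝ (Fin d) | u ∈ Λ ∧ u +ᵥ F ⊆ P})
    (ht : t ∈ {u : EuclideanSpace ℝ (Fin d) | u ∈ Λ ∧ u +ᵥ F ⊆ P})
    (hst : s ≠ t) :
    ∃ f : EuclideanSpace ℝ (Fin d) →L[ℝ] ℝ, f ≠ 0 ∧
      (∀ v ∈ Submodule.span ℝ {x : EuclideanSpace ℝ (Fin d) | ∃ a ∈ F, ∃ b ∈ F, x = a - b},
        f v = 0) ∧
      f s < f t ∧
      ∀ u ∈ {u : EuclideanSpace ℝ (Fin d) | u ∈ Λ ∧ u +ᵥ F ⊆ P}, f s ≤ f u ∧ f u ≤ f t := by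
  obtain ⟨hsΛ, hsF⟩ := hs
  obtain ⟨htΛ, htF⟩ := ht
  have hdisj : Disjoint (interior P) (interior ((t - s) +ᵥ P)) := by
    simpa using hpack 0 (zero_mem Λ) (t - s) (sub_mem htΛ hsΛ) (sub_ne_zero.2 hst.symm).symm
  obtain ⟨f, c, hf0, hP, hfQ⟩ := geometric_hahn_banach_of_disjoint_interior hPconvex
    (hPconvex.vadd (t - s)) ⟨0, hP0⟩ (by rw [interior_vadd]; exact ⟨_, vadd_mem_vadd_set hP0⟩)
    hdisj
  have hQ : ∀ x ∈ P, c ≤ f (t - s + x) := fun x hx => hfQ _ (vadd_mem_vadd_set hx)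
  have hlt : f s < f t := by
    have hc : 0 < c := by simpa using hf0 0 hP0
    have hts : c ≤ f (t - s) := by simpa using hQ 0 (interior_subset hP0)
    rw [map_sub] at hts
    linarith
  obtain ⟨a, ha⟩ := hF
  have hconst : ∀ x ∈ F, ∀ y ∈ F, f x = f y := fun x hx y hy => by
    linarith [map_add_eq_of_vadd_subset hP hQ hsF htF hx,
      map_add_eq_of_vadd_subset hP hQ hsF htF hy]
  exact ⟨f, fun hf => by simp [hf] at hlt,
    LinearMap.map_eq_zero_of_mem_span_sub (f := f.toLinearMap) hconst, hlt,
    fun u hu => map_mem_Icc_of_vadd_subset hP hQ hsF htF ha hu.2⟩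

/-- Lemma antipod: for distinct `s, t` in `T = {t ∈ Λ : F + t ⊆ P}` there is a
nonzero continuous linear functional vanishing on the direction space `V` of `F`
which separates `s` from `t` and bounds all of `T` between them. -/
theorem antipodal_functional_of_packing (d : ℕ)
    (P : Set (EuclideanSpace ℝ (Fin d))) (hPcompact : IsCompact P) (hPconvex : Convex ℝ P)
    (hP0 : (0 : EuclideanSpace ℝ (Fin d)) ∈ interior P)
    (Λ : AddSubgroup (EuclideanSpace ℝ (Fin d)))
    (hpack : ∀ s ∈ Λ, ∀ t ∈ Λ, s ≠ t →
      Disjoint (interior (s +ᵥ P)) (interior (t +ᵥ P)))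
    (F : Set (EuclideanSpace ℝ (Fin d))) (hF : F.Nonempty)
    (s t : EuclideanSpace ℝ (Fin d))
    (hs : s ∈ {u : EuclideanSpace ℝ (Fin d) | u ∈ Λ ∧ u +ᵥ F ⊆ P})
    (ht : t ∈ {u : EuclideanSpace ℝ (Fin d) | u ∈ Λ ∧ u +ᵥ F ⊆ P})
    (hst : s ≠ t) :
    ∃ f : EuclideanSpace ℝ (Fin d) →L[ℝ] ℝ, f ≠ 0 ∧
      (∀ v ∈ Submodule.span ℝ {x : EuclideanSpace ℝ (Fin d) | ∃ a ∈ F, ∃ b ∈ F, x = a - b},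
        f v = 0) ∧
      f s < f t ∧
      ∀ u ∈ {u : EuclideanSpace ℝ (Fin d) | u ∈ Λ ∧ u +ᵥ F ⊆ P}, f s ≤ f u ∧ f u ≤ f t :=
  antipodal_functional_of_packing_general d P hPconvex hP0 Λ hpack F hF s t hs ht hst
end
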